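/- arXiv:2505.23263 — 2 statements merged into one kernel-verified Lean document; each statement's English description precedes it below -/
import Mathlib

section
/- Let f be a continuous linear functional on ℓ∞ with f(e) = 0, where e = (1,1,1,…). Then ‖f‖ = 2·sup{f(x) : 0 ≤ x ≤ e} = 2·sup{f(𝟙_A) : A ⊆ ω}. -/
open Filter Topology

noncomputable section

abbrev LInf : Type := lp (fun _ : ℕ => ℝ) (⊤ : ENNReal)

def indic (A : Set ℕ) : LInf :=
  ⟨A.indicator (fun _ => (1:ℝ)), memℓp_infty ⟨1, by
    rintro r ⟨n, rfl⟩
    by_cases h : n ∈ A <;> simp [Set.indicator, h]⟩⟩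

def IsIdealOmega (I : Set (Set ℕ)) : Prop :=
  (∀ A B : Set ℕ, A ∈ I → B ⊆ A → B ∈ I) ∧
  (∀ A B : Set ℕ, A ∈ I → B ∈ I → A ∪ B ∈ I) ∧
  (Set.univ : Set ℕ) ∉ I ∧
  (∀ A : Set ℕ, A.Finite → A ∈ I)

def SLI (I : Set (Set ℕ)) : Set (LInf →L[ℝ] ℝ) :=
  {f | (∀ x : LInf, (∀ n, 0 ≤ x n) → 0 ≤ f x) ∧
       (∀ (x : LInf) (a : ℝ), Tendsto (fun n => x n) atTop (𝓝 a) → f x = a) ∧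
       (∀ A ∈ I, f (indic A) = 0)}

def UltI (I : Set (Set ℕ)) : Set (Ultrafilter ℕ) :=
  {F | (↑F : Filter ℕ) ≤ cofinite ∧ ∀ A ∈ I, Aᶜ ∈ F}

def IClusterPoint (I : Set (Set ℕ)) (x : ℕ → ℝ) (η : ℝ) : Prop :=
  ∀ ε > 0, {n | |x n - η| ≤ ε} ∉ I

def IConv (I : Set (Set ℕ)) (x : ℕ → ℝ) (η : ℝ) : Prop :=
  ∀ ε > 0, {n | ε ≤ |x n - η|} ∈ I

def eone : LInf := indic Set.univ

lemma indic_apply (A : Set ℕ) (n : ℕ) : (indic A) n = A.indicator (fun _ => (1:ℝ)) n := rfl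

lemma eone_apply (n : ℕ) : eone n = 1 := by
  simp [eone, indic_apply, Set.indicator]

set_option maxHeartbeats 1000000 in
theorem stmt5 (f : LInf →L[ℝ] ℝ) (hf : f eone = 0) :
    ‖f‖ = 2 * sSup {r : ℝ | ∃ x : LInf, (∀ n, 0 ≤ x n ∧ x n ≤ 1) ∧ f x = r} ∧
    ‖f‖ = 2 * sSup {r : ℝ | ∃ A : Set ℕ, f (indic A) = r} := by
  set S1 : Set ℝ := {r : ℝ | ∃ x : LInf, (∀ n, 0 ≤ x n ∧ x n ≤ 1) ∧ f x = r} with hS1def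
  set S2 : Set ℝ := {r : ℝ | ∃ A : Set ℕ, f (indic A) = r} with hS2def
  -- bound above for S1
  have hub : ∀ r ∈ S1, r ≤ ‖f‖ / 2 := by
    rintro r ⟨x, hx, rfl⟩
    have hy : ‖(2:ℝ) • x - eone‖ ≤ 1 := by
      apply lp.norm_le_of_forall_le zero_le_one
      intro n
      have : ((2:ℝ) • x - eone) n = 2 * x n - 1 := by
        rw [lp.coeFn_sub, Pi.sub_apply, lp.coeFn_smul, Pi.smul_apply, eone_apply,
          smul_eq_mul]
      rw [this]
      rw [Real.norm_eq_abs, abs_le]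
      constructor <;> nlinarith [(hx n).1, (hx n).2]
    have := f.le_opNorm ((2:ℝ) • x - eone)
    have h2 : f ((2:ℝ) • x - eone) = 2 * f x := by
      rw [map_sub, map_smul, hf, smul_eq_mul]; ring
    have h3 : |2 * f x| ≤ ‖f‖ := by
      calc |2 * f x| = ‖f ((2:ℝ) • x - eone)‖ := by rw [h2, Real.norm_eq_abs]
        _ ≤ ‖f‖ * ‖(2:ℝ) • x - eone‖ := this
        _ ≤ ‖f‖ * 1 := by gcongr
        _ = ‖f‖ := mul_one _
    have := (abs_le.mp h3).2
    linarith
  have hS1ne : S1.Nonempty := ⟨f 0, ⟨0, fun n => by simp [lp.coeFn_zero], rfl⟩⟩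
  have hS1bdd : BddAbove S1 := ⟨‖f‖ / 2, hub⟩
  have hS1le : sSup S1 ≤ ‖f‖ / 2 := csSup_le hS1ne hub
  -- ‖f‖ ≤ 2 sSup S1
  have key : ∀ y : LInf, ‖y‖ ≤ 1 → f y ≤ 2 * sSup S1 := by
    intro y hy
    set x : LInf := (2:ℝ)⁻¹ • (y + eone) with hxdef
    have hx : ∀ n, 0 ≤ x n ∧ x n ≤ 1 := by
      intro n
      have hb : |y n| ≤ 1 := by
        have := lp.norm_apply_le_norm (ENNReal.top_ne_zero) y n
        rw [Real.norm_eq_abs] at this; linarith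
      have : x n = (y n + 1) / 2 := by
        rw [hxdef, lp.coeFn_smul, Pi.smul_apply, lp.coeFn_add, Pi.add_apply, eone_apply]
        simp [smul_eq_mul]; ring
      rw [this]
      rw [abs_le] at hb
      constructor <;> linarith [hb.1, hb.2]
    have hfx : f x ≤ sSup S1 := le_csSup hS1bdd ⟨x, hx, rfl⟩
    have : f x = (f y) / 2 := by
      rw [hxdef, map_smul, map_add, hf, smul_eq_mul]; ring
    linarith
  have hnorm_le : ‖f‖ ≤ 2 * sSup S1 := by
    have h0 : (0:ℝ) ≤ 2 * sSup S1 := by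
      have : (0:ℝ) ∈ S1 := ⟨0, fun n => by simp [lp.coeFn_zero], map_zero f⟩
      have := le_csSup hS1bdd this
      linarith
    apply f.opNorm_le_bound h0
    intro y
    rcases eq_or_ne y 0 with rfl | hy0
    · rw [map_zero, norm_zero, norm_zero, mul_zero]
    · have hny : 0 < ‖y‖ := by
        rcases (norm_nonneg y).eq_or_lt with h | h
        · exact absurd ((norm_eq_zero (a := y)).mp h.symm) hy0
        · exact h
      have h1 : f (‖y‖⁻¹ • y) ≤ 2 * sSup S1 := by
        apply key
        rw [norm_smul, norm_inv, norm_norm]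
        rw [inv_mul_cancel₀ hny.ne']
      have h2 : f (-(‖y‖⁻¹ • y)) ≤ 2 * sSup S1 := by
        apply key
        rw [norm_neg, norm_smul, norm_inv, norm_norm, inv_mul_cancel₀ hny.ne']
      rw [map_neg] at h2
      rw [map_smul, smul_eq_mul] at h1 h2
      rw [Real.norm_eq_abs]
      have h3 : |f y| = ‖y‖ * |‖y‖⁻¹ * f y| := by
        rw [abs_mul, abs_inv, abs_of_pos hny, ← mul_assoc,
          mul_inv_cancel₀ hny.ne', one_mul]
      rw [h3]
      have h4 : |‖y‖⁻¹ * f y| ≤ 2 * sSup S1 := abs_le.mpr ⟨by linarith, h1⟩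
      calc ‖y‖ * |‖y‖⁻¹ * f y| ≤ ‖y‖ * (2 * sSup S1) := by gcongr
        _ = 2 * sSup S1 * ‖y‖ := by ring
  have eq1 : ‖f‖ = 2 * sSup S1 := le_antisymm hnorm_le (by linarith)
  -- now S2
  have hind : ∀ A : Set ℕ, ∀ n, 0 ≤ (indic A) n ∧ (indic A) n ≤ 1 := by
    intro A n
    by_cases h : n ∈ A <;> simp [indic_apply, Set.indicator, h]
  have hS2sub : ∀ r ∈ S2, r ∈ S1 := by
    rintro r ⟨A, rfl⟩
    exact ⟨indic A, hind A, rfl⟩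
  have hS2ne : S2.Nonempty := ⟨f (indic ∅), ∅, rfl⟩
  have hS2bdd : BddAbove S2 := ⟨‖f‖ / 2, fun r hr => hub r (hS2sub r hr)⟩
  have hS2le : sSup S2 ≤ sSup S1 := csSup_le hS2ne fun r hr => le_csSup hS1bdd (hS2sub r hr)
  -- step approximation : sSup S1 ≤ sSup S2
  have step : ∀ x : LInf, (∀ n, 0 ≤ x n ∧ x n ≤ 1) → ∀ N : ℕ, 0 < N →
      f x ≤ sSup S2 + ‖f‖ * (N:ℝ)⁻¹ := by
    intro x hx N hN
    have hNR : (0:ℝ) < N := Nat.cast_pos.mpr hN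
    set g : LInf := (N:ℝ)⁻¹ • ∑ k ∈ Finset.range N, indic {n | ((k:ℝ)+1)/N ≤ x n} with hgdef
    have hg : ∀ n, g n = (⌊(N:ℝ) * x n⌋₊ : ℝ) / N := by
      intro n
      have h1 : g n = (N:ℝ)⁻¹ * ∑ k ∈ Finset.range N,
          (indic {m | ((k:ℝ)+1)/N ≤ x m}) n := by
        rw [hgdef, lp.coeFn_smul, Pi.smul_apply, smul_eq_mul, lp.coeFn_sum, Finset.sum_apply]
      rw [h1]
      have h2 : ∀ k : ℕ, (indic {m | ((k:ℝ)+1)/N ≤ x m}) n =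
          if ((k:ℝ)+1)/N ≤ x n then 1 else 0 := by
        intro k
        by_cases h : ((k:ℝ)+1)/N ≤ x n <;>
          simp [indic_apply, Set.indicator, Set.mem_setOf_eq, h]
      simp only [h2]
      set M := ⌊(N:ℝ) * x n⌋₊ with hM
      have hfl : (M:ℝ) ≤ (N:ℝ) * x n := Nat.floor_le (mul_nonneg hNR.le (hx n).1)
      have hMN : M ≤ N := by
        have hle : (N:ℝ) * x n ≤ N := by nlinarith [(hx n).1, (hx n).2]
        calc M ≤ ⌊(N:ℝ)⌋₊ := Nat.floor_le_floor hle
          _ = N := Nat.floor_natCast N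
      have hiff : ∀ k ∈ Finset.range N,
          (if ((k:ℝ)+1)/N ≤ x n then (1:ℝ) else 0) =
          (if k ∈ Finset.range M then (1:ℝ) else 0) := by
        intro k hk
        rw [Finset.mem_range] at hk
        have : (((k:ℝ)+1)/N ≤ x n) ↔ (k ∈ Finset.range M) := by
          rw [Finset.mem_range]
          constructor
          · intro h
            rw [div_le_iff₀ hNR] at h
            have : ((k+1 : ℕ) : ℝ) ≤ (N:ℝ) * x n := by push_cast; nlinarith
            have := Nat.le_floor this
            omega
          · intro h
            have h1 : ((k:ℝ) + 1) ≤ (M:ℝ) := by exact_mod_cast h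
            rw [div_le_iff₀ hNR]
            nlinarith
        exact if_congr this rfl rfl
      rw [Finset.sum_congr rfl hiff, Finset.sum_ite_mem,
        Finset.inter_eq_right.mpr (Finset.range_subset_range.mpr hMN), Finset.sum_const,
        Finset.card_range, nsmul_eq_mul, mul_one, inv_mul_eq_div]
    -- bounds on x - g
    have hclose : ‖x - g‖ ≤ (N:ℝ)⁻¹ := by
      apply lp.norm_le_of_forall_le (by positivity)
      intro n
      rw [lp.coeFn_sub, Pi.sub_apply, hg n, Real.norm_eq_abs, abs_le]
      set M := ⌊(N:ℝ) * x n⌋₊ with hM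
      have hfl : (M:ℝ) ≤ (N:ℝ) * x n := Nat.floor_le (mul_nonneg hNR.le (hx n).1)
      have hfl2 : (N:ℝ) * x n < (M:ℝ) + 1 := Nat.lt_floor_add_one _
      have hc : (N:ℝ) * ((M:ℝ)/N) = M := by field_simp
      have hd : (N:ℝ) * (N:ℝ)⁻¹ = 1 := mul_inv_cancel₀ hNR.ne'
      constructor
      · nlinarith [hfl, hfl2, hc, hd, hNR]
      · nlinarith [hfl, hfl2, hc, hd, hNR]
    -- f g ≤ sSup S2
    have hfg : f g ≤ sSup S2 := by
      have : f g = (N:ℝ)⁻¹ * ∑ k ∈ Finset.range N, f (indic {n | ((k:ℝ)+1)/N ≤ x n}) := by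
        rw [hgdef, map_smul, smul_eq_mul, map_sum]
      rw [this]
      have hsum : ∑ k ∈ Finset.range N, f (indic {n | ((k:ℝ)+1)/N ≤ x n}) ≤
          ∑ _k ∈ Finset.range N, sSup S2 := by
        apply Finset.sum_le_sum
        intro k _
        exact le_csSup hS2bdd ⟨_, rfl⟩
      rw [Finset.sum_const, Finset.card_range, nsmul_eq_mul] at hsum
      calc (N:ℝ)⁻¹ * ∑ k ∈ Finset.range N, f (indic {n | ((k:ℝ)+1)/N ≤ x n})
          ≤ (N:ℝ)⁻¹ * ((N:ℝ) * sSup S2) :=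
            mul_le_mul_of_nonneg_left hsum (by positivity)
        _ = sSup S2 := by field_simp
    have hdiff : f (x - g) ≤ ‖f‖ * (N:ℝ)⁻¹ := by
      calc f (x - g) ≤ |f (x - g)| := le_abs_self _
        _ = ‖f (x - g)‖ := (Real.norm_eq_abs _).symm
        _ ≤ ‖f‖ * ‖x - g‖ := f.le_opNorm _
        _ ≤ ‖f‖ * (N:ℝ)⁻¹ := by gcongr
    have : f x = f g + f (x - g) := by rw [← map_add]; congr 1; abel
    linarith
  -- conclude sSup S1 ≤ sSup S2
  have hS1le2 : sSup S1 ≤ sSup S2 := by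
    apply csSup_le hS1ne
    rintro r ⟨x, hx, rfl⟩
    refine le_of_forall_pos_le_add ?_
    intro ε hε
    obtain ⟨N, hNgt⟩ := exists_nat_gt (‖f‖ / ε)
    have hN0 : 0 < N := by
      have h1 : (0:ℝ) ≤ ‖f‖ / ε := div_nonneg (norm_nonneg f) hε.le
      have h2 : (0:ℝ) < N := lt_of_le_of_lt h1 hNgt
      exact_mod_cast h2
    have := step x hx N hN0
    have hlt : ‖f‖ * (N:ℝ)⁻¹ ≤ ε := by
      rw [mul_inv_le_iff₀ (by exact_mod_cast hN0)]
      rw [div_lt_iff₀ hε] at hNgt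
      nlinarith
    linarith
  have eq12 : sSup S1 = sSup S2 := le_antisymm hS1le2 hS2le
  exact ⟨eq1, by rw [eq1, eq12]⟩
end
end

section
/- Let I be an ideal on ω. The set of extreme points of SL(I) (a weak-star compact convex subset of ℓ∞') is exactly {f_F : F ∈ Ult(I)}, the ultrafilter-limit functionals associated with free ultrafilters extending the dual filter of I. -/
open Filter Topology

noncomputable section

/- ### Auxiliary lemmas -/

lemma indic_apply_mem {A : Set ℕ} {n : ℕ} (h : n ∈ A) : indic A n = 1 := by
  show A.indicator (fun _ => (1:ℝ)) n = 1
  rw [Set.indicator_of_mem h]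

lemma indic_apply_notMem {A : Set ℕ} {n : ℕ} (h : n ∉ A) : indic A n = 0 := by
  show A.indicator (fun _ => (1:ℝ)) n = 0
  rw [Set.indicator_of_notMem h]

lemma indic_add_compl (A : Set ℕ) : indic A + indic Aᶜ = eone := by
  apply lp.ext
  funext n
  rw [lp.coeFn_add]
  show indic A n + indic Aᶜ n = eone n
  rw [eone_apply]
  by_cases h : n ∈ A
  · rw [indic_apply_mem h, indic_apply_notMem (by simpa using h)]; ring
  · rw [indic_apply_notMem h, indic_apply_mem (by simpa using h)]; ring

lemma norm_apply_le (x : LInf) (n : ℕ) : |x n| ≤ ‖x‖ :=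
  lp.norm_apply_le_norm ENNReal.top_ne_zero x n

lemma memIndicMul (A : Set ℕ) (x : LInf) :
    Memℓp (A.indicator (fun n => x n)) (⊤ : ENNReal) := by
  apply memℓp_infty
  refine ⟨‖x‖, ?_⟩
  rintro r ⟨n, rfl⟩
  show ‖A.indicator (fun n => x n) n‖ ≤ ‖x‖
  by_cases h : n ∈ A
  · rw [Set.indicator_of_mem h]; exact norm_apply_le x n
  · rw [Set.indicator_of_notMem h]; rw [norm_zero]; exact norm_nonneg x

def mulIndic (A : Set ℕ) : LInf →L[ℝ] LInf := by
  refine LinearMap.mkContinuous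
    { toFun := fun x => ⟨A.indicator (fun n => x n), memIndicMul A x⟩
      map_add' := ?_
      map_smul' := ?_ } 1 ?_
  · intro x y
    apply lp.ext
    funext n
    show A.indicator (fun n => (x+y) n) n = (_ + _ : LInf) n
    rw [lp.coeFn_add]
    show A.indicator (fun n => (x+y) n) n
      = A.indicator (fun n => x n) n + A.indicator (fun n => y n) n
    by_cases h : n ∈ A
    · simp only [Set.indicator_of_mem h, lp.coeFn_add, Pi.add_apply]
    · simp only [Set.indicator_of_notMem h, add_zero]
  · intro c x
    apply lp.ext
    funext n
    show A.indicator (fun n => (c • x) n) n = (c • (⟨_, memIndicMul A x⟩ : LInf)) n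
    rw [lp.coeFn_smul]
    show A.indicator (fun n => (c • x) n) n = c • A.indicator (fun n => x n) n
    by_cases h : n ∈ A
    · simp only [Set.indicator_of_mem h, lp.coeFn_smul, Pi.smul_apply]
    · simp only [Set.indicator_of_notMem h, smul_zero]
  · intro x
    rw [one_mul]
    apply lp.norm_le_of_forall_le (norm_nonneg x)
    intro n
    show ‖A.indicator (fun n => x n) n‖ ≤ ‖x‖
    by_cases h : n ∈ A
    · rw [Set.indicator_of_mem h]; exact norm_apply_le x n
    · rw [Set.indicator_of_notMem h]; rw [norm_zero]; exact norm_nonneg x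

lemma mulIndic_apply_mem {A : Set ℕ} (x : LInf) {n : ℕ} (h : n ∈ A) :
    mulIndic A x n = x n := Set.indicator_of_mem h _

lemma mulIndic_apply_notMem {A : Set ℕ} (x : LInf) {n : ℕ} (h : n ∉ A) :
    mulIndic A x n = 0 := Set.indicator_of_notMem h _

lemma mulIndic_add_compl (A : Set ℕ) (x : LInf) :
    mulIndic A x + mulIndic Aᶜ x = x := by
  apply lp.ext
  funext n
  rw [lp.coeFn_add]
  show mulIndic A x n + mulIndic Aᶜ x n = x n
  by_cases h : n ∈ A
  · rw [mulIndic_apply_mem x h, mulIndic_apply_notMem x (by simpa using h)]; ring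
  · rw [mulIndic_apply_notMem x h, mulIndic_apply_mem x (by simpa using h)]; ring

lemma mulIndic_indic (A B : Set ℕ) : mulIndic A (indic B) = indic (A ∩ B) := by
  apply lp.ext
  funext n
  by_cases h : n ∈ A
  · rw [mulIndic_apply_mem _ h]
    by_cases hb : n ∈ B
    · rw [indic_apply_mem hb, indic_apply_mem (Set.mem_inter h hb)]
    · rw [indic_apply_notMem hb, indic_apply_notMem (fun hc => hb hc.2)]
  · rw [mulIndic_apply_notMem _ h, indic_apply_notMem (fun hc => h hc.1)]

lemma pos_mono {f : LInf →L[ℝ] ℝ} (hf : ∀ x : LInf, (∀ n, 0 ≤ x n) → 0 ≤ f x)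
    {x y : LInf} (h : ∀ n, x n ≤ y n) : f x ≤ f y := by
  have h0 : 0 ≤ f (y - x) := by
    apply hf
    intro n
    have : (y - x) n = y n - x n := by rw [lp.coeFn_sub]; rfl
    rw [this]
    linarith [h n]
  have := map_sub f y x
  linarith [this ▸ h0]

lemma keyLemma {f : LInf →L[ℝ] ℝ}
    (hpos : ∀ x : LInf, (∀ n, 0 ≤ x n) → 0 ≤ f x) (hone : f eone = 1)
    (F : Ultrafilter ℕ) (hF : ∀ A ∈ F, f (indic A) = 1) (x : LInf) :
    Tendsto (fun n => x n) (↑F : Filter ℕ) (𝓝 (f x)) := by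
  obtain ⟨L, hL, hlim⟩ : ∃ L ∈ Set.Icc (-‖x‖) ‖x‖,
      (↑(F.map (fun n => x n)) : Filter ℝ) ≤ 𝓝 L := by
    apply (isCompact_Icc (a := -‖x‖) (b := ‖x‖)).ultrafilter_le_nhds
    rw [Ultrafilter.coe_map, le_principal_iff, mem_map]
    filter_upwards with n
    exact abs_le.mp (norm_apply_le x n)
  have hlim' : Tendsto (fun n => x n) (↑F : Filter ℕ) (𝓝 L) := hlim
  suffices hfx : f x = L by rw [hfx]; exact hlim'
  have key : ∀ ε : ℝ, 0 < ε → |f x - L| ≤ ε := by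
    intro ε hε
    set A : Set ℕ := {n | |x n - L| ≤ ε} with hA
    have hAF : A ∈ F := by
      have := Metric.tendsto_nhds.mp hlim' ε hε
      rw [← Ultrafilter.mem_coe]
      filter_upwards [this] with n hn
      simpa [hA, Real.dist_eq] using le_of_lt hn
    have hcompl : f (indic Aᶜ) = 0 := by
      have h1 : f (indic A) + f (indic Aᶜ) = 1 := by
        rw [← map_add, indic_add_compl, hone]
      rw [hF A hAF] at h1; linarith
    set C : ℝ := ‖x‖ + |L| with hC
    have hCpos : 0 ≤ C := by positivity
    have hub : f (x - L • eone) ≤ ε := by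
      calc f (x - L • eone) ≤ f (ε • eone + C • indic Aᶜ) := by
            apply pos_mono hpos
            intro n
            have e1 : (x - L • eone) n = x n - L := by
              rw [lp.coeFn_sub]
              show x n - (L • eone) n = x n - L
              rw [lp.coeFn_smul]
              show x n - L • eone n = x n - L
              rw [eone_apply]; simp
            have e2 : (ε • eone + C • indic Aᶜ) n = ε + C * indic Aᶜ n := by
              rw [lp.coeFn_add]
              show (ε • eone) n + (C • indic Aᶜ) n = _
              rw [lp.coeFn_smul, lp.coeFn_smul]
              show ε • eone n + C • indic Aᶜ n = _
              rw [eone_apply]; simp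
            rw [e1, e2]
            by_cases hn : n ∈ A
            · rw [indic_apply_notMem (by simpa using hn)]
              simp only [hA, Set.mem_setOf_eq] at hn
              linarith [(abs_le.mp hn).2]
            · rw [indic_apply_mem (by simpa using hn)]
              have := (abs_le.mp (norm_apply_le x n)).2
              have := neg_abs_le L
              linarith
          _ = ε := by
            rw [map_add, map_smul, map_smul, hone, hcompl]
            simp
    have hlb : f (L • eone - x) ≤ ε := by
      calc f (L • eone - x) ≤ f (ε • eone + C • indic Aᶜ) := by
            apply pos_mono hpos
            intro n
            have e1 : (L • eone - x) n = L - x n := by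
              rw [lp.coeFn_sub]
              show (L • eone) n - x n = L - x n
              rw [lp.coeFn_smul]
              show L • eone n - x n = L - x n
              rw [eone_apply]; simp
            have e2 : (ε • eone + C • indic Aᶜ) n = ε + C * indic Aᶜ n := by
              rw [lp.coeFn_add]
              show (ε • eone) n + (C • indic Aᶜ) n = _
              rw [lp.coeFn_smul, lp.coeFn_smul]
              show ε • eone n + C • indic Aᶜ n = _
              rw [eone_apply]; simp
            rw [e1, e2]
            by_cases hn : n ∈ A
            · rw [indic_apply_notMem (by simpa using hn)]
              simp only [hA, Set.mem_setOf_eq] at hn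
              linarith [(abs_le.mp hn).1]
            · rw [indic_apply_mem (by simpa using hn)]
              have h1 := (abs_le.mp (norm_apply_le x n)).1
              have h2 := le_abs_self L
              linarith
          _ = ε := by
            rw [map_add, map_smul, map_smul, hone, hcompl]
            simp
    have hfx1 : f (x - L • eone) = f x - L := by
      rw [map_sub, map_smul, hone]; simp
    have hfx2 : f (L • eone - x) = L - f x := by
      rw [map_sub, map_smul, hone]; simp
    rw [abs_sub_le_iff]
    constructor
    · linarith [hfx1 ▸ hub]
    · linarith [hfx2 ▸ hlb]
  have h0 : |f x - L| ≤ 0 := le_of_forall_pos_le_add (by intro ε hε; linarith [key ε hε])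
  have : |f x - L| = 0 := le_antisymm h0 (abs_nonneg _)
  linarith [sub_eq_zero.mp (abs_eq_zero.mp this)]

/- ### facts about members of SLI -/

lemma SLI_eone {I : Set (Set ℕ)} {f : LInf →L[ℝ] ℝ} (hf : f ∈ SLI I) : f eone = 1 := by
  apply hf.2.1
  have : (fun n => eone n) = fun _ : ℕ => (1:ℝ) := funext eone_apply
  rw [this]
  exact tendsto_const_nhds

lemma SLI_indic_nonneg {I : Set (Set ℕ)} {f : LInf →L[ℝ] ℝ} (hf : f ∈ SLI I) (A : Set ℕ) :
    0 ≤ f (indic A) := by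
  apply hf.1
  intro n
  by_cases h : n ∈ A
  · rw [indic_apply_mem h]; norm_num
  · rw [indic_apply_notMem h]

lemma SLI_indic_le_one {I : Set (Set ℕ)} {f : LInf →L[ℝ] ℝ} (hf : f ∈ SLI I) (A : Set ℕ) :
    f (indic A) ≤ 1 := by
  have := pos_mono hf.1 (x := indic A) (y := eone) (fun n => by
    rw [eone_apply]
    by_cases h : n ∈ A
    · rw [indic_apply_mem h]
    · rw [indic_apply_notMem h]; norm_num)
  rw [SLI_eone hf] at this
  exact this

/-- Splitting lemma: the normalized restriction to A belongs to SLI. -/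
lemma SLI_split {I : Set (Set ℕ)} (hI : IsIdealOmega I) {f : LInf →L[ℝ] ℝ} (hf : f ∈ SLI I)
    (A : Set ℕ) (ht : 0 < f (indic A)) :
    (f (indic A))⁻¹ • (f.comp (mulIndic A)) ∈ SLI I := by
  set t := f (indic A) with htdef
  refine ⟨?_, ?_, ?_⟩
  · intro x hx
    have h1 : 0 ≤ f (mulIndic A x) := by
      apply hf.1
      intro n
      by_cases h : n ∈ A
      · rw [mulIndic_apply_mem x h]; exact hx n
      · rw [mulIndic_apply_notMem x h]
    have : ((t⁻¹ • f.comp (mulIndic A)) x : ℝ) = t⁻¹ * f (mulIndic A x) := by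
      simp [ContinuousLinearMap.smul_apply]
    rw [this]
    positivity
  · intro x a hx
    have hz : Tendsto (fun n => (mulIndic A x - a • indic A) n) atTop (𝓝 0) := by
      refine squeeze_zero_norm (a := fun n => |x n - a|) ?_ ?_
      · intro n
        have e1 : (mulIndic A x - a • indic A) n = mulIndic A x n - a * indic A n := by
          rw [lp.coeFn_sub]
          show mulIndic A x n - (a • indic A) n = _
          rw [lp.coeFn_smul]; rfl
        rw [Real.norm_eq_abs, e1]
        by_cases h : n ∈ A
        · rw [mulIndic_apply_mem x h, indic_apply_mem h, mul_one]
        · rw [mulIndic_apply_notMem x h, indic_apply_notMem h, mul_zero,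
            sub_zero, abs_zero]
          exact abs_nonneg _
      · have := (hx.sub_const a).abs
        simpa using this
    have hfz : f (mulIndic A x - a • indic A) = 0 := hf.2.1 _ 0 hz
    have hfm : f (mulIndic A x) = a * t := by
      have := map_sub f (mulIndic A x) (a • indic A)
      rw [hfz, map_smul] at this
      have h2 : 0 = f (mulIndic A x) - a * t := by
        simpa [htdef] using this
      linarith
    have : ((t⁻¹ • f.comp (mulIndic A)) x : ℝ) = t⁻¹ * f (mulIndic A x) := by
      simp [ContinuousLinearMap.smul_apply]
    rw [this, hfm]
    field_simp
  · intro B hB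
    have : ((t⁻¹ • f.comp (mulIndic A)) (indic B) : ℝ) = t⁻¹ * f (mulIndic A (indic B)) := by
      simp [ContinuousLinearMap.smul_apply]
    rw [this, mulIndic_indic]
    rw [hf.2.2 (A ∩ B) (hI.1 B (A ∩ B) hB Set.inter_subset_right)]
    ring

theorem stmt9 (I : Set (Set ℕ)) (hI : IsIdealOmega I) :
    Set.extremePoints ℝ (SLI I) =
      {f : LInf →L[ℝ] ℝ | ∃ F ∈ UltI I,
        ∀ x : LInf, Tendsto (fun n => x n) (↑F : Filter ℕ) (𝓝 (f x))} := by
  apply Set.eq_of_subset_of_subset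
  · -- extreme point → ultrafilter limit
    intro f hf
    obtain ⟨hfS, hext⟩ := mem_extremePoints.mp hf
    have hone : f eone = 1 := SLI_eone hfS
    have hcompl_eq : ∀ A : Set ℕ, f (indic Aᶜ) = 1 - f (indic A) := by
      intro A
      have h1 : f (indic A) + f (indic Aᶜ) = 1 := by
        rw [← map_add, indic_add_compl, hone]
      linarith
    -- two-valuedness
    have htwo : ∀ A : Set ℕ, f (indic A) = 0 ∨ f (indic A) = 1 := by
      intro A
      by_contra hc
      push_neg at hc
      obtain ⟨h0, h1⟩ := hc
      set t := f (indic A) with htdef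
      have ht0 : 0 < t := lt_of_le_of_ne (SLI_indic_nonneg hfS A) (Ne.symm h0)
      have ht1 : t < 1 := lt_of_le_of_ne (SLI_indic_le_one hfS A) h1
      have htc : f (indic Aᶜ) = 1 - t := hcompl_eq A
      set g := (t⁻¹ • (f.comp (mulIndic A)) : LInf →L[ℝ] ℝ) with hgdef
      set h := (((1-t))⁻¹ • (f.comp (mulIndic Aᶜ)) : LInf →L[ℝ] ℝ) with hhdef
      have hgS : g ∈ SLI I := SLI_split hI hfS A ht0
      have hhS : h ∈ SLI I := by
        have := SLI_split hI hfS Aᶜ (by rw [htc]; linarith)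
        rwa [htc] at this
      have hseg : f ∈ openSegment ℝ g h := by
        refine ⟨t, 1-t, ht0, by linarith, by ring, ?_⟩
        apply ContinuousLinearMap.ext
        intro x
        have e1 : (t • g + (1-t) • h) x = t * (g x) + (1-t) * (h x) := by
          simp [ContinuousLinearMap.add_apply, ContinuousLinearMap.smul_apply]
        have e2 : g x = t⁻¹ * f (mulIndic A x) := by
          simp [hgdef, ContinuousLinearMap.smul_apply]
        have e3 : h x = (1-t)⁻¹ * f (mulIndic Aᶜ x) := by
          simp [hhdef, ContinuousLinearMap.smul_apply]
        rw [e1, e2, e3]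
        have e4 : f (mulIndic A x) + f (mulIndic Aᶜ x) = f x := by
          rw [← map_add, mulIndic_add_compl]
        rw [← mul_assoc, ← mul_assoc, mul_inv_cancel₀ (ne_of_gt ht0),
          mul_inv_cancel₀ (by linarith : (1:ℝ) - t ≠ 0), one_mul, one_mul]
        exact e4
      have hgf : g = f := (hext g hgS h hhS hseg).1
      have hg1 : g (indic A) = 1 := by
        have e2 : g (indic A) = t⁻¹ * f (mulIndic A (indic A)) := by
          simp [hgdef, ContinuousLinearMap.smul_apply]
        rw [e2, mulIndic_indic, Set.inter_self, ← htdef]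
        field_simp
      rw [hgf] at hg1
      rw [← htdef] at hg1
      exact h1 hg1
    -- build the ultrafilter
    have hmono : ∀ A B : Set ℕ, A ⊆ B → f (indic A) ≤ f (indic B) := by
      intro A B hAB
      apply pos_mono hfS.1
      intro n
      by_cases hn : n ∈ A
      · rw [indic_apply_mem hn, indic_apply_mem (hAB hn)]
      · rw [indic_apply_notMem hn]
        by_cases hb : n ∈ B
        · rw [indic_apply_mem hb]; norm_num
        · rw [indic_apply_notMem hb]
    set G : Filter ℕ :=
      { sets := {A | f (indic A) = 1}
        univ_sets := hone
        sets_of_superset := by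
          intro A B hA hAB
          refine le_antisymm (SLI_indic_le_one hfS B) ?_
          calc (1:ℝ) = f (indic A) := hA.symm
            _ ≤ f (indic B) := hmono A B hAB
        inter_sets := by
          intro A B hA hB
          refine le_antisymm (SLI_indic_le_one hfS _) ?_
          have key : f (indic A + indic B) ≤ f (indic (A ∩ B) + eone) := by
            apply pos_mono hfS.1
            intro n
            rw [lp.coeFn_add, lp.coeFn_add]
            show indic A n + indic B n ≤ indic (A ∩ B) n + eone n
            rw [eone_apply]
            by_cases ha : n ∈ A <;> by_cases hb : n ∈ B
            · rw [indic_apply_mem ha, indic_apply_mem hb,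
                indic_apply_mem (Set.mem_inter ha hb)]
              try norm_num
            · rw [indic_apply_mem ha, indic_apply_notMem hb,
                indic_apply_notMem (fun hc => hb hc.2)]
              try norm_num
            · rw [indic_apply_notMem ha, indic_apply_mem hb,
                indic_apply_notMem (fun hc => ha hc.1)]
              try norm_num
            · rw [indic_apply_notMem ha, indic_apply_notMem hb,
                indic_apply_notMem (fun hc => ha hc.1)]
              try norm_num
          rw [map_add, map_add, hone] at key
          have hA' : f (indic A) = 1 := hA
          have hB' : f (indic B) = 1 := hB
          rw [hA', hB'] at key
          linarith } with hGdef
    have hGmem : ∀ A : Set ℕ, A ∈ G ↔ f (indic A) = 1 := fun A => Iff.rfl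
    have hcnm : ∀ s : Set ℕ, sᶜ ∉ G ↔ s ∈ G := by
      intro s
      rw [hGmem, hGmem, hcompl_eq s]
      rcases htwo s with h0 | h1
      · rw [h0]; norm_num
      · rw [h1]; norm_num
    set F : Ultrafilter ℕ := Ultrafilter.ofComplNotMemIff G hcnm with hFdef
    have hFmem : ∀ A : Set ℕ, A ∈ F ↔ f (indic A) = 1 := fun A => Iff.rfl
    refine ⟨F, ⟨?_, ?_⟩, ?_⟩
    · intro s hs
      rw [mem_cofinite] at hs
      have h0 : f (indic sᶜ) = 0 := hfS.2.2 sᶜ (hI.2.2.2 sᶜ hs)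
      rw [Ultrafilter.mem_coe, hFmem]
      have := hcompl_eq s
      rcases htwo s with hh | hh
      · rw [hh] at this; rw [h0] at this; norm_num at this
      · exact hh
    · intro A hA
      rw [hFmem, hcompl_eq A, hfS.2.2 A hA]
      norm_num
    · exact keyLemma hfS.1 hone F (fun A hA => (hFmem A).mp hA)
  · -- ultrafilter limit → extreme point
    intro f hf
    obtain ⟨F, ⟨hFcof, hFI⟩, htend⟩ := hf
    have hfS : f ∈ SLI I := by
      refine ⟨?_, ?_, ?_⟩
      · intro x hx
        exact ge_of_tendsto (htend x) (Eventually.of_forall hx)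
      · intro x a hx
        refine tendsto_nhds_unique (htend x) (hx.mono_left ?_)
        rw [← Nat.cofinite_eq_atTop]
        exact hFcof
      · intro A hA
        have h0 : Tendsto (fun n => indic A n) (↑F : Filter ℕ) (𝓝 0) := by
          apply Tendsto.congr' _ tendsto_const_nhds
          filter_upwards [hFI A hA] with n hn
          exact (indic_apply_notMem hn).symm
        exact tendsto_nhds_unique (htend (indic A)) h0
    have hone : f eone = 1 := SLI_eone hfS
    have hfind : ∀ A ∈ F, f (indic A) = 1 := by
      intro A hA
      have h1 : Tendsto (fun n => indic A n) (↑F : Filter ℕ) (𝓝 1) := by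
        apply Tendsto.congr' _ tendsto_const_nhds
        filter_upwards [hA] with n hn
        exact (indic_apply_mem hn).symm
      exact tendsto_nhds_unique (htend (indic A)) h1
    rw [mem_extremePoints]
    refine ⟨hfS, ?_⟩
    intro g hgS h hhS hseg
    obtain ⟨a, b, ha, hb, hab, heq⟩ := hseg
    have hgf : ∀ A ∈ F, g (indic A) = 1 ∧ h (indic A) = 1 := by
      intro A hA
      have h1 : a * g (indic A) + b * h (indic A) = 1 := by
        have := congrArg (fun φ : LInf →L[ℝ] ℝ => φ (indic A)) heq
        simp only [ContinuousLinearMap.add_apply, ContinuousLinearMap.smul_apply,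
          smul_eq_mul] at this
        rw [hfind A hA] at this
        exact this
      have hg1 := SLI_indic_le_one hgS A
      have hg0 := SLI_indic_nonneg hgS A
      have hh1 := SLI_indic_le_one hhS A
      have hh0 := SLI_indic_nonneg hhS A
      have e : a * (1 - g (indic A)) + b * (1 - h (indic A)) = 0 := by
        linear_combination hab - h1
      have t1 : 0 ≤ a * (1 - g (indic A)) := mul_nonneg ha.le (by linarith)
      have t2 : 0 ≤ b * (1 - h (indic A)) := mul_nonneg hb.le (by linarith)
      have hga : a * (1 - g (indic A)) = 0 := by linarith
      have hhb : b * (1 - h (indic A)) = 0 := by linarith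
      constructor
      · rcases mul_eq_zero.mp hga with hc | hc
        · exact absurd hc (ne_of_gt ha)
        · linarith
      · rcases mul_eq_zero.mp hhb with hc | hc
        · exact absurd hc (ne_of_gt hb)
        · linarith
    have hgeq : g = f := by
      apply ContinuousLinearMap.ext
      intro x
      exact tendsto_nhds_unique
        (keyLemma hgS.1 (SLI_eone hgS) F (fun A hA => (hgf A hA).1) x) (htend x)
    have hheq : h = f := by
      apply ContinuousLinearMap.ext
      intro x
      exact tendsto_nhds_unique
        (keyLemma hhS.1 (SLI_eone hhS) F (fun A hA => (hgf A hA).2) x) (htend x)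
    exact ⟨hgeq, hheq⟩
end
end
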